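/- Let δ: G → W be a W-groupoid where G is a group (one chamber), let B = {g ∈ G : δ(g) = 1} be its Borel subgroup, and suppose the induced map δ_B: B\G/B → W is a bijection with inverse C: W → B\G/B. If w ∈ W and s ∈ S satisfy ws < w, then C(ws) ⊆ C(w)C(s) (as subsets of G). -/

import Mathlib

/-!
Pick `g₀ ∈ C(w)`. Axiom (WG3) yields `h` with `δ h = ws` and `δ (h⁻¹ g₀) = s`. Since `δ_B` is
injective, every `g ∈ C(ws)` is `b h b'` with `b, b' ∈ B`, and then
`g = (b g₀) ((h⁻¹ g₀)⁻¹ b')`. The two factors lie in `C(w)` and `C(s)` because `δ` is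
invariant under inversion and under multiplication by `B` on either side, both consequences
of (WG2) and the antisymmetry of the Bruhat order.
-/

open List Pointwise

variable {B : Type*} {W : Type*} [Group W] {M : CoxeterMatrix B}

/-- The Bruhat order on a Coxeter group, defined via the subword property. -/
def BruhatLE (cs : CoxeterSystem M W) (v w : W) : Prop :=
  ∃ ω : List B, cs.IsReduced ω ∧ cs.wordProd ω = w ∧
    ∃ ω' : List B, ω'.Sublist ω ∧ cs.wordProd ω' = v

variable {G : Type*} [Group G]

/-- A `W`-groupoid structure on a group `G` (a `W`-groupoid with one chamber):
a weak function `δ : G → W` satisfying (WG1), (WG2), (WG3). -/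
structure IsGroupWGroupoid (cs : CoxeterSystem M W) (δ : G → W) : Prop where
  weak : ∀ i : B, ∃ g : G, δ g = cs.simple i
  wg1 : δ 1 = 1
  wg2 : ∀ g h : G, BruhatLE cs (δ g * δ h) (δ (g * h))
  wg3 : ∀ (g : G) (i : B), cs.IsRightDescent (δ g) i →
    ∃ h : G, δ (h⁻¹ * g) = cs.simple i ∧ δ h = δ g * cs.simple i

/-- The fiber `C(w) = δ⁻¹(w)`, which is the double coset `B w B` when
`δ_B : B\G/B → W` is a bijection. -/
def Cset (δ : G → W) (w : W) : Set G := {g : G | δ g = w}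

/-- `δ_B : B\G/B → W` is a bijection: `δ` is surjective, and any two elements with
the same image lie in the same `(B,B)`-double coset, where `B = δ⁻¹(1)`. -/
def DeltaBBijective (δ : G → W) : Prop :=
  (∀ w : W, ∃ g : G, δ g = w) ∧
  (∀ g h : G, δ g = δ h → ∃ b ∈ Cset δ 1, ∃ b' ∈ Cset δ 1, h = b * g * b')

section

variable {cs : CoxeterSystem M W}

namespace BruhatLE

theorem length_le {v w : W} (h : BruhatLE cs v w) : cs.length v ≤ cs.length w := by
  obtain ⟨ω, hred, rfl, ω', hsub, rfl⟩ := h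
  calc cs.length (cs.wordProd ω') ≤ ω'.length := cs.length_wordProd_le ω'
    _ ≤ ω.length := hsub.length_le
    _ = cs.length (cs.wordProd ω) := hred.symm

theorem antisymm {v w : W} (hvw : BruhatLE cs v w) (hwv : BruhatLE cs w v) : v = w := by
  have hlen : cs.length v = cs.length w := le_antisymm hvw.length_le hwv.length_le
  obtain ⟨ω, hred, rfl, ω', hsub, rfl⟩ := hvw
  have hω' : ω' = ω := hsub.eq_of_length <| le_antisymm hsub.length_le <|
    calc ω.length = cs.length (cs.wordProd ω') := hred.symm.trans hlen.symm
      _ ≤ ω'.length := cs.length_wordProd_le ω'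
  rw [hω']

theorem eq_one {v : W} (h : BruhatLE cs v 1) : v = 1 :=
  cs.length_eq_zero_iff.mp <| Nat.le_zero.mp (cs.length_one ▸ h.length_le)

end BruhatLE

namespace IsGroupWGroupoid

variable {δ : G → W}

theorem map_inv (hδ : IsGroupWGroupoid cs δ) (g : G) : δ g⁻¹ = (δ g)⁻¹ := by
  have h := hδ.wg2 g g⁻¹
  rw [mul_inv_cancel, hδ.wg1] at h
  exact eq_inv_of_mul_eq_one_right h.eq_one

theorem map_borel_mul (hδ : IsGroupWGroupoid cs δ) {b : G} (hb : δ b = 1) (x : G) :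
    δ (b * x) = δ x := by
  have hle := hδ.wg2 b x
  have hge := hδ.wg2 b⁻¹ (b * x)
  rw [hb, one_mul] at hle
  rw [hδ.map_inv, hb, inv_one, one_mul, inv_mul_cancel_left] at hge
  exact (hle.antisymm hge).symm

theorem map_mul_borel (hδ : IsGroupWGroupoid cs δ) {b : G} (hb : δ b = 1) (x : G) :
    δ (x * b) = δ x := by
  have hle := hδ.wg2 x b
  have hge := hδ.wg2 (x * b) b⁻¹
  rw [hb, mul_one] at hle
  rw [hδ.map_inv, hb, inv_one, mul_one, mul_inv_cancel_right] at hge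
  exact (hle.antisymm hge).symm

end IsGroupWGroupoid

end

/-- Let `δ : G → W` be a `W`-groupoid with one chamber such that `δ_B` is a
bijection. If `ws < w`, then `C(ws) ⊆ C(w)C(s)`. -/
theorem stmt12 (cs : CoxeterSystem M W) (δ : G → W)
    (hwg : IsGroupWGroupoid cs δ) (hbij : DeltaBBijective δ)
    (w : W) (i : B) (hlt : cs.IsRightDescent w i) :
    Cset δ (w * cs.simple i) ⊆ Cset δ w * Cset δ (cs.simple i) := by
  intro g hg
  obtain ⟨g₀, hg₀⟩ := hbij.1 w
  obtain ⟨h, hs, hws⟩ := hwg.wg3 g₀ i (hg₀ ▸ hlt)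
  obtain ⟨b, hb, b', hb', rfl⟩ := hbij.2 h g (by rw [hg, hws, hg₀])
  have hfactor : b * h * b' = (b * g₀) * ((h⁻¹ * g₀)⁻¹ * b') := by group
  rw [hfactor]
  refine Set.mul_mem_mul ?_ ?_
  · show δ (b * g₀) = w
    rw [hwg.map_borel_mul hb, hg₀]
  · show δ ((h⁻¹ * g₀)⁻¹ * b') = cs.simple i
    rw [hwg.map_mul_borel hb', hwg.map_inv, hs, cs.inv_simple]
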